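/- arXiv:1507.02089 — 2 statements merged into one kernel-verified Lean document; each statement's English description precedes it below -/
import Mathlib

section
/- Let G = (V,E) be a finite simple graph, δ ∈ (0,1), η > 0, θ ∈ [0, 2π/3), u ∈ V, and F ⊆ E with δ(u) ⊆ F, and let φ : F → {1,…,k}. Suppose that for each v ∈ N(u) ∪ {u}, all h ∈ S_G(δ,η), and all maps ψ, ψ' : F ∪ δ(v) → {1,…,k} extending φ, we have p^{F∪δ(v)}_ψ(G)(h) ≠ 0 and the angle between p^{F∪δ(v)}_ψ(G)(h) and p^{F∪δ(v)}_{ψ'}(G)(h) is at most θ. Then for each v ∈ N(u) ∪ {u} and all h ∈ S_G(δ,η): |p^F_φ(G)(h)| ≥ cos(θ/2)·Σ_{α ∈ ℕ^k_{deg(v)}, φ ∼_v α} |h^v(α)|·|∂p^F_φ(G)/∂x^v_α (h)|. -/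
/-!
Split the colorings extending `φ` on `F` into classes according to their restriction to
`F ∪ δ(v)`; the class of `ψ` sums to `p^{F∪δ(v)}_ψ`. Since `δ(v) ⊆ F ∪ δ(v)`, the color vector
at `v` is constant on each class, so `h^v(α) · ∂p^F_φ/∂x^v_α` is a sum of whole classes and the
triangle inequality bounds `Σ_α |h^v(α)| |∂p^F_φ/∂x^v_α|` by `Σ_ψ |p^{F∪δ(v)}_ψ|`, while
`p^F_φ = Σ_ψ p^{F∪δ(v)}_ψ`. Finally, nonzero complex numbers with pairwise angles at most
`θ < 2π/3` lie in a sector of aperture `θ`: measured from one of them, their arguments differ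
pairwise by less than `2π`, so no wrap-around occurs. Projecting onto the bisector of that sector
gives `|Σ z| ≥ cos(θ/2) Σ |z|`.
-/

noncomputable section

variable {V : Type} [Fintype V] [DecidableEq V]

/-- `colorVec G φ v j` = number of edges incident with `v` that `φ` colors `j`,
so `colorVec G φ v = φ(δ(v)) ∈ ℕ^k`. -/
def colorVec {k : ℕ} (G : SimpleGraph V) (φ : G.edgeSet → Fin k) (v : V) : Fin k → ℕ :=
  fun j => Nat.card {e : G.edgeSet // v ∈ (e : Sym2 V) ∧ φ e = j}

/-- Contraction of the tensor network `(G, h)`: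
`p(G)(h) = Σ_{φ : E → [k]} Π_{v ∈ V} h^v(φ(δ(v)))`. -/
def tnc (k : ℕ) (G : SimpleGraph V) (h : V → (Fin k → ℕ) → ℂ) : ℂ :=
  ∑ᶠ φ : G.edgeSet → Fin k, ∏ v : V, h v (colorVec G φ v)

/-- Degree of a vertex. -/
def deg (G : SimpleGraph V) (v : V) : ℕ := Nat.card (G.neighborSet v)

/-- Maximum degree Δ(G). -/
def maxDeg (G : SimpleGraph V) : ℕ := Finset.univ.sup (deg G)

/-- Membership in `S_G(δ,η)`: for every vertex `v` and all `α, α' ∈ ℕ^k` with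
`|α| = |α'| = deg(v)` we have `|h^v(α) − h^v(α')| < δ` and `|h^v(α)| ≥ η`. -/
def memS (k : ℕ) (G : SimpleGraph V) (h : V → (Fin k → ℕ) → ℂ) (δ η : ℝ) : Prop :=
  ∀ v : V, ∀ α α' : Fin k → ℕ, (∑ j, α j) = deg G v → (∑ j, α' j) = deg G v →
    ‖h v α - h v α'‖ < δ ∧ η ≤ ‖h v α‖


/-- The set `δ(u)` of edges incident with `u`. -/
def incSet (G : SimpleGraph V) (u : V) : Set G.edgeSet := {e | u ∈ (e : Sym2 V)}

/-- The restricted partition function `p^F_φ(G)(h)`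
`= Σ_{ψ : E → [k], ψ|_F = φ} Π_{v ∈ V} h^v(ψ(δ(v)))`. -/
def rpf (k : ℕ) (G : SimpleGraph V) (h : V → (Fin k → ℕ) → ℂ)
    (F : Set G.edgeSet) (φ : G.edgeSet → Fin k) : ℂ :=
  ∑ᶠ ψ ∈ {ψ : G.edgeSet → Fin k | ∀ e ∈ F, ψ e = φ e}, ∏ v : V, h v (colorVec G ψ v)

/-- The partial derivative `∂p^F_φ(G)/∂x^v_α` evaluated at `h`:
`Σ_{ψ : E → [k], ψ|_F = φ, ψ(δ(v)) = α} Π_{u ≠ v} h^u(ψ(δ(u)))`. -/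
def rpfDeriv (k : ℕ) (G : SimpleGraph V) (h : V → (Fin k → ℕ) → ℂ)
    (F : Set G.edgeSet) (φ : G.edgeSet → Fin k) (v : V) (α : Fin k → ℕ) : ℂ :=
  ∑ᶠ ψ ∈ {ψ : G.edgeSet → Fin k | (∀ e ∈ F, ψ e = φ e) ∧ colorVec G ψ v = α},
    ∏ u ∈ Finset.univ.erase v, h u (colorVec G ψ u)

/-- `α` is `v`-compatible with `φ` relative to `F` (written `φ ∼_v α`): some coloring
agreeing with `φ` on `F` sees exactly `α` at `v`. -/
def Compat {k : ℕ} (G : SimpleGraph V) (F : Set G.edgeSet) (φ : G.edgeSet → Fin k)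
    (v : V) (α : Fin k → ℕ) : Prop :=
  ∃ ψ : G.edgeSet → Fin k, (∀ e ∈ F, ψ e = φ e) ∧ colorVec G ψ v = α

/-- The angle between two nonzero complex numbers viewed as plane vectors:
`|arg(a/b)| ∈ [0,π]`. -/
def cangle (a b : ℂ) : ℝ := |Complex.arg (a / b)|

open Real Complex Finset

theorem Real.Angle.eq_of_coe_eq_coe_of_abs_sub_lt {x y : ℝ} (h : (x : Real.Angle) = y)
    (hxy : |x - y| < 2 * π) : x = y := by
  obtain ⟨n, hn⟩ := Real.Angle.angle_eq_iff_two_pi_dvd_sub.mp h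
  rw [hn, abs_mul, abs_of_pos two_pi_pos, mul_lt_iff_lt_one_right two_pi_pos, ← Int.cast_abs,
    ← Int.cast_one, Int.cast_lt, Int.abs_lt_one_iff] at hxy
  rw [← sub_eq_zero, hn, hxy, Int.cast_zero, mul_zero]

theorem Complex.arg_div_eq_arg_div_sub_arg_div {a b c : ℂ} {θ : ℝ} (ha : a ≠ 0) (hb : b ≠ 0)
    (hc : c ≠ 0) (hθ : θ < 2 * π / 3) (hab : |arg (a / b)| ≤ θ) (hac : |arg (a / c)| ≤ θ)
    (hbc : |arg (b / c)| ≤ θ) : arg (a / b) = arg (a / c) - arg (b / c) := by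
  refine Real.Angle.eq_of_coe_eq_coe_of_abs_sub_lt ?_ ?_
  · rw [Real.Angle.coe_sub, arg_div_coe_angle ha hb, arg_div_coe_angle ha hc,
      arg_div_coe_angle hb hc]
    abel
  · rw [abs_le] at hab hac hbc
    rw [abs_lt]
    constructor <;> linarith

theorem Finset.exists_forall_abs_sub_le_half {ι : Type*} (s : Finset ι) (f : ι → ℝ) {d : ℝ}
    (h : ∀ i ∈ s, ∀ j ∈ s, f i - f j ≤ d) : ∃ m, ∀ i ∈ s, |f i - m| ≤ d / 2 := by
  rcases s.eq_empty_or_nonempty with rfl | hs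
  · exact ⟨0, by simp⟩
  obtain ⟨i₁, hi₁, hmin⟩ := s.exists_mem_eq_inf' hs f
  obtain ⟨i₂, hi₂, hmax⟩ := s.exists_mem_eq_sup' hs f
  refine ⟨(f i₁ + f i₂) / 2, fun i hi => abs_le.mpr ⟨?_, ?_⟩⟩
  · have := hmin ▸ s.inf'_le f hi
    linarith [h i₂ hi₂ i₁ hi₁]
  · have := hmax ▸ s.le_sup' f hi
    linarith [h i₂ hi₂ i₁ hi₁]

theorem Complex.cos_mul_norm_le_re_mul_exp {z : ℂ} {m θ : ℝ} (hθ : θ ≤ π)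
    (hz : |arg z - m| ≤ θ) : Real.cos θ * ‖z‖ ≤ (z * exp (↑(-m) * I)).re := by
  have hrot : z * exp (↑(-m) * I) = ‖z‖ * exp (↑(arg z - m) * I) := by
    conv_lhs => rw [← norm_mul_exp_arg_mul_I z]
    rw [mul_assoc, ← exp_add]
    push_cast
    ring_nf
  rw [hrot, re_ofReal_mul, exp_ofReal_mul_I_re, mul_comm, ← Real.cos_abs (arg z - m)]
  exact mul_le_mul_of_nonneg_left
    (cos_le_cos_of_nonneg_of_le_pi (abs_nonneg _) hθ hz) (norm_nonneg z)

theorem Complex.cos_mul_sum_norm_le_norm_sum {ι : Type*} (s : Finset ι) (z : ι → ℂ) {m θ : ℝ}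
    (hθ : θ ≤ π) (hz : ∀ i ∈ s, |arg (z i) - m| ≤ θ) :
    Real.cos θ * ∑ i ∈ s, ‖z i‖ ≤ ‖∑ i ∈ s, z i‖ :=
  calc Real.cos θ * ∑ i ∈ s, ‖z i‖ ≤ ∑ i ∈ s, (z i * exp (↑(-m) * I)).re := by
        rw [mul_sum]
        exact sum_le_sum fun i hi => cos_mul_norm_le_re_mul_exp hθ (hz i hi)
    _ = ((∑ i ∈ s, z i) * exp (↑(-m) * I)).re := by rw [sum_mul, re_sum]
    _ ≤ ‖∑ i ∈ s, z i‖ := by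
        refine (re_le_norm _).trans_eq ?_
        rw [norm_mul, norm_exp_ofReal_mul_I, mul_one]

theorem cos_half_mul_sum_norm_le_norm_sum_of_cangle_le {ι : Type*} (s : Finset ι) (z : ι → ℂ)
    {θ : ℝ} (hθ : θ < 2 * π / 3) (hne : ∀ i ∈ s, z i ≠ 0)
    (hangle : ∀ i ∈ s, ∀ j ∈ s, cangle (z i) (z j) ≤ θ) :
    Real.cos (θ / 2) * ∑ i ∈ s, ‖z i‖ ≤ ‖∑ i ∈ s, z i‖ := by
  rcases s.eq_empty_or_nonempty with rfl | ⟨i₀, hi₀⟩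
  · simp
  have hc := hne i₀ hi₀
  have hspread : ∀ i ∈ s, ∀ j ∈ s, arg (z i / z i₀) - arg (z j / z i₀) ≤ θ := fun i hi j hj => by
    rw [← arg_div_eq_arg_div_sub_arg_div (hne i hi) (hne j hj) hc hθ (hangle i hi j hj)
      (hangle i hi i₀ hi₀) (hangle j hj i₀ hi₀)]
    exact (le_abs_self _).trans (hangle i hi j hj)
  obtain ⟨m, hm⟩ := s.exists_forall_abs_sub_le_half _ hspread
  have hsector := cos_mul_sum_norm_le_norm_sum s (fun i => z i / z i₀)
    (by linarith [pi_pos]) hm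
  simp only [norm_div, ← sum_div, ← mul_div_assoc] at hsector
  exact (div_le_div_iff_of_pos_right (norm_pos_iff.mpr hc)).mp hsector

theorem Finset.sum_norm_sum_fiberwise_le_of_comp_eq {ι κ β E : Type*} [SeminormedAddCommGroup E]
    [DecidableEq κ] [DecidableEq β] (s : Finset ι) (f : ι → E) {p : ι → κ} {g : ι → β}
    {g' : κ → β} (hg : ∀ i ∈ s, g' (p i) = g i) :
    ∑ b ∈ s.image g, ‖∑ i ∈ s with g i = b, f i‖
      ≤ ∑ c ∈ s.image p, ‖∑ i ∈ s with p i = c, f i‖ := by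
  have hcoarse : ∀ b, ∑ i ∈ s with g i = b, f i
      = ∑ c ∈ s.image p with g' c = b, ∑ i ∈ s with p i = c, f i := fun b => by
    rw [← sum_fiberwise_of_maps_to (s := s.filter (g · = b)) (t := (s.image p).filter (g' · = b))
      (g := p) ?_]
    · refine sum_congr rfl fun c hc => ?_
      rw [filter_filter]
      refine sum_congr (filter_congr fun i hi => ?_) fun _ _ => rfl
      constructor
      · exact And.right
      · intro hpi
        exact ⟨(hg i hi).symm.trans (hpi ▸ (mem_filter.mp hc).2), hpi⟩
    · intro i hi
      obtain ⟨his, rfl⟩ := mem_filter.mp hi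
      exact mem_filter.mpr ⟨mem_image_of_mem p his, hg i his⟩
  calc ∑ b ∈ s.image g, ‖∑ i ∈ s with g i = b, f i‖
      ≤ ∑ b ∈ s.image g, ∑ c ∈ s.image p with g' c = b, ‖∑ i ∈ s with p i = c, f i‖ :=
        sum_le_sum fun b _ => (hcoarse b).symm ▸ norm_sum_le _ _
    _ = ∑ c ∈ s.image p, ‖∑ i ∈ s with p i = c, f i‖ := by
        refine sum_fiberwise_of_maps_to (fun c hc => ?_) _
        obtain ⟨i, hi, rfl⟩ := mem_image.mp hc
        exact hg i hi ▸ mem_image_of_mem g hi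

theorem Set.piecewise_eq_piecewise_iff {α β : Type*} {s : Set α} [∀ a, Decidable (a ∈ s)]
    {f f' g : α → β} : s.piecewise f g = s.piecewise f' g ↔ Set.EqOn f f' s := by
  refine ⟨fun h a ha => ?_, fun h => funext fun a => ?_⟩
  · simpa [Set.piecewise_eq_of_mem _ _ _ ha] using congrFun h a
  · by_cases ha : a ∈ s
    · simp only [Set.piecewise_eq_of_mem _ _ _ ha, h ha]
    · simp only [Set.piecewise_eq_of_notMem _ _ _ ha]

section TensorNetwork

variable {k : ℕ} {G : SimpleGraph V}

omit [Fintype V] [DecidableEq V] in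
theorem colorVec_congr {ψ ψ' : G.edgeSet → Fin k} {v : V}
    (hag : ∀ e : G.edgeSet, v ∈ (e : Sym2 V) → ψ e = ψ' e) :
    colorVec G ψ v = colorVec G ψ' v := by
  funext j
  exact Nat.card_congr (Equiv.subtypeEquivRight fun e =>
    and_congr_right fun hv => by rw [hag e hv])

theorem sum_colorVec (ψ : G.edgeSet → Fin k) (v : V) : ∑ j, colorVec G ψ v j = deg G v := by
  classical
  let _ : Fintype G.edgeSet := Fintype.ofFinite _
  have hfiber : ∀ j, colorVec G ψ v j
      = Fintype.card {x : {e : G.edgeSet // v ∈ (e : Sym2 V)} // ψ x.1 = j} := fun j => by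
    rw [colorVec, Nat.card_congr ((Equiv.subtypeSubtypeEquivSubtypeInter _ _).symm),
      Nat.card_eq_fintype_card]
  simp_rw [hfiber]
  rw [← Fintype.card_sigma, Fintype.card_congr (Equiv.sigmaFiberEquiv _), deg,
    ← Nat.card_eq_fintype_card]
  refine Nat.card_congr ((Equiv.subtypeSubtypeEquivSubtypeInter (· ∈ G.edgeSet) (v ∈ ·)).trans
    ((Equiv.subtypeEquivRight fun e => ?_).trans (G.incidenceSetEquivNeighborSet v)))
  simp [SimpleGraph.incidenceSet]

variable [Fintype G.edgeSet]

open Classical in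
def extensions (F : Set G.edgeSet) (φ : G.edgeSet → Fin k) : Finset (G.edgeSet → Fin k) :=
  {ψ | Set.EqOn ψ φ F}

def coloringWeight (h : V → (Fin k → ℕ) → ℂ) (ψ : G.edgeSet → Fin k) : ℂ :=
  ∏ v, h v (colorVec G ψ v)

omit [Fintype V] in
theorem mem_extensions {F : Set G.edgeSet} {φ ψ : G.edgeSet → Fin k} :
    ψ ∈ extensions F φ ↔ Set.EqOn ψ φ F := by
  simp [extensions]

omit [Fintype V] in
theorem coe_extensions (F : Set G.edgeSet) (φ : G.edgeSet → Fin k) :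
    (extensions F φ : Set (G.edgeSet → Fin k)) = {ψ | Set.EqOn ψ φ F} :=
  Set.ext fun _ => mem_extensions

theorem rpf_eq_sum_extensions (h : V → (Fin k → ℕ) → ℂ) (F : Set G.edgeSet)
    (φ : G.edgeSet → Fin k) :
    rpf k G h F φ = ∑ ψ ∈ extensions F φ, coloringWeight h ψ := by
  rw [rpf, ← finsum_mem_coe_finset, coe_extensions]
  rfl

theorem mul_rpfDeriv_eq_sum (h : V → (Fin k → ℕ) → ℂ) (F : Set G.edgeSet)
    (φ : G.edgeSet → Fin k) (v : V) (α : Fin k → ℕ) :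
    h v α * rpfDeriv k G h F φ v α
      = ∑ ψ ∈ extensions F φ with colorVec G ψ v = α, coloringWeight h ψ := by
  have hset : {ψ | (∀ e ∈ F, ψ e = φ e) ∧ colorVec G ψ v = α}
      = ↑({ψ ∈ extensions F φ | colorVec G ψ v = α}) := by
    ext ψ
    rw [coe_filter, Set.mem_ofPred_eq, Set.mem_ofPred_eq, mem_extensions]
    rfl
  rw [rpfDeriv, hset, finsum_mem_coe_finset, mul_sum]
  refine sum_congr rfl fun ψ hψ => ?_
  rw [coloringWeight, ← mul_prod_erase univ _ (mem_univ v), (mem_filter.mp hψ).2]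

theorem sum_extensions_piecewise_eq_rpf (h : V → (Fin k → ℕ) → ℂ) {F E : Set G.edgeSet}
    (hFE : F ⊆ E) [∀ e, Decidable (e ∈ E)] {φ ψ : G.edgeSet → Fin k} (hψ : Set.EqOn ψ φ F) :
    ∑ ψ' ∈ extensions F φ with E.piecewise ψ' φ = E.piecewise ψ φ, coloringWeight h ψ'
      = rpf k G h E (E.piecewise ψ φ) := by
  rw [rpf_eq_sum_extensions]
  refine sum_congr (Finset.ext fun ψ' => ?_) fun _ _ => rfl
  have hρ : Set.EqOn (E.piecewise ψ φ) ψ E := Set.piecewise_eqOn _ _ _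
  simp only [mem_filter, mem_extensions, Set.piecewise_eq_piecewise_iff]
  refine ⟨fun ⟨_, hE⟩ => hE.trans hρ.symm, fun hE => ?_⟩
  have hE' := hE.trans hρ
  exact ⟨fun e he => (hE' (hFE he)).trans (hψ he), hE'⟩

theorem setOf_compat_eq_image (F : Set G.edgeSet) (φ : G.edgeSet → Fin k) (v : V) :
    {α | ∑ j, α j = deg G v ∧ Compat G F φ v α}
      = ((extensions F φ).image (colorVec G · v) : Set (Fin k → ℕ)) := by
  ext α
  simp only [Set.mem_ofPred_eq, coe_image, coe_extensions, Set.mem_image, Compat]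
  refine ⟨fun ⟨_, ψ, hψ, hα⟩ => ⟨ψ, hψ, hα⟩, fun ⟨ψ, hψ, hα⟩ => ⟨?_, ψ, hψ, hα⟩⟩
  rw [← hα, sum_colorVec]

theorem cos_half_mul_sum_norm_mul_rpfDeriv_le (h : V → (Fin k → ℕ) → ℂ) {F E : Set G.edgeSet}
    [∀ e, Decidable (e ∈ E)] (hFE : F ⊆ E) {v : V} (hvE : incSet G v ⊆ E) {θ : ℝ}
    (hθ : θ ∈ Set.Ico 0 (2 * π / 3)) {φ : G.edgeSet → Fin k}
    (hne : ∀ ψ : G.edgeSet → Fin k, Set.EqOn ψ φ F → rpf k G h E ψ ≠ 0)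
    (hangle : ∀ ψ ψ' : G.edgeSet → Fin k, Set.EqOn ψ φ F → Set.EqOn ψ' φ F →
      cangle (rpf k G h E ψ) (rpf k G h E ψ') ≤ θ) :
    Real.cos (θ / 2) * ∑ α ∈ (extensions F φ).image (colorVec G · v),
        ‖h v α‖ * ‖rpfDeriv k G h F φ v α‖
      ≤ ‖rpf k G h F φ‖ := by
  -- `E.piecewise ψ φ` is the representative of the class of colorings agreeing with `ψ` on `E`.
  have hrestrict : ∀ ρ ∈ (extensions F φ).image (E.piecewise · φ), Set.EqOn ρ φ F := by
    intro ρ hρ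
    obtain ⟨ψ, hψ, rfl⟩ := mem_image.mp hρ
    exact fun e he => (Set.piecewise_eq_of_mem _ _ _ (hFE he)).trans (mem_extensions.mp hψ he)
  have hfiber : ∀ ρ ∈ (extensions F φ).image (E.piecewise · φ),
      ∑ ψ ∈ extensions F φ with E.piecewise ψ φ = ρ, coloringWeight h ψ = rpf k G h E ρ := by
    intro ρ hρ
    obtain ⟨ψ, hψ, rfl⟩ := mem_image.mp hρ
    exact sum_extensions_piecewise_eq_rpf h hFE (mem_extensions.mp hψ)
  have hsplit : rpf k G h F φ = ∑ ρ ∈ (extensions F φ).image (E.piecewise · φ), rpf k G h E ρ := by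
    rw [rpf_eq_sum_extensions,
      ← sum_fiberwise_of_maps_to fun ψ hψ => mem_image_of_mem (E.piecewise · φ) hψ]
    exact sum_congr rfl hfiber
  have hcolor : ∀ ψ ∈ extensions F φ, colorVec G (E.piecewise ψ φ) v = colorVec G ψ v :=
    fun ψ _ => colorVec_congr fun e he => Set.piecewise_eq_of_mem _ _ _ (hvE he)
  have hcos : 0 ≤ Real.cos (θ / 2) :=
    cos_nonneg_of_neg_pi_div_two_le_of_le (by linarith [hθ.1, pi_pos]) (by linarith [hθ.2, pi_pos])
  calc Real.cos (θ / 2) * ∑ α ∈ (extensions F φ).image (colorVec G · v),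
        ‖h v α‖ * ‖rpfDeriv k G h F φ v α‖
      = Real.cos (θ / 2) * ∑ α ∈ (extensions F φ).image (colorVec G · v),
          ‖∑ ψ ∈ extensions F φ with colorVec G ψ v = α, coloringWeight h ψ‖ := by
        simp_rw [← norm_mul, mul_rpfDeriv_eq_sum]
    _ ≤ Real.cos (θ / 2) * ∑ ρ ∈ (extensions F φ).image (E.piecewise · φ),
          ‖∑ ψ ∈ extensions F φ with E.piecewise ψ φ = ρ, coloringWeight h ψ‖ :=
        mul_le_mul_of_nonneg_left
          (sum_norm_sum_fiberwise_le_of_comp_eq (g' := (colorVec G · v)) _ _ hcolor) hcos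
    _ = Real.cos (θ / 2) * ∑ ρ ∈ (extensions F φ).image (E.piecewise · φ), ‖rpf k G h E ρ‖ := by
        rw [sum_congr rfl fun ρ hρ => congrArg norm (hfiber ρ hρ)]
    _ ≤ ‖rpf k G h F φ‖ := hsplit ▸ cos_half_mul_sum_norm_le_norm_sum_of_cangle_le _ _ hθ.2
        (fun ρ hρ => hne ρ (hrestrict ρ hρ))
        (fun ρ hρ ρ' hρ' => hangle ρ ρ' (hrestrict ρ hρ) (hrestrict ρ' hρ'))

end TensorNetwork

theorem stmt6_general (k : ℕ) (G : SimpleGraph V)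
    (δ η θ : ℝ)
    (hθ : θ ∈ Set.Ico 0 (2 * Real.pi / 3))
    (u : V) (F : Set G.edgeSet)
    (φ : G.edgeSet → Fin k)
    (hyp : ∀ v ∈ insert u (G.neighborSet u),
      ∀ h : V → (Fin k → ℕ) → ℂ, memS k G h δ η →
      ∀ ψ ψ' : G.edgeSet → Fin k,
        (∀ e ∈ F, ψ e = φ e) → (∀ e ∈ F, ψ' e = φ e) →
        rpf k G h (F ∪ incSet G v) ψ ≠ 0 ∧
        cangle (rpf k G h (F ∪ incSet G v) ψ) (rpf k G h (F ∪ incSet G v) ψ') ≤ θ) :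
    ∀ v ∈ insert u (G.neighborSet u),
    ∀ h : V → (Fin k → ℕ) → ℂ, memS k G h δ η →
      Real.cos (θ / 2) *
          (∑ᶠ α ∈ {α : Fin k → ℕ | (∑ j, α j) = deg G v ∧ Compat G F φ v α},
            ‖h v α‖ * ‖rpfDeriv k G h F φ v α‖)
        ≤ ‖rpf k G h F φ‖ := by
  classical
  intro v hv h hS
  let _ : Fintype G.edgeSet := Fintype.ofFinite _
  rw [setOf_compat_eq_image, finsum_mem_coe_finset]
  exact cos_half_mul_sum_norm_mul_rpfDeriv_le h Set.subset_union_left Set.subset_union_right hθ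
    (fun ψ hψ => (hyp v hv h hS ψ ψ hψ hψ).1) fun ψ ψ' hψ hψ' => (hyp v hv h hS ψ ψ' hψ hψ').2

/-- partition function bound lemma: if `δ(u) ⊆ F` and, for each
`v ∈ N(u) ∪ {u}`, all `h ∈ S_G(δ,η)` and all extensions `ψ, ψ'` of `φ`, the values
`p^{F∪δ(v)}_ψ(G)(h)` are nonzero and pairwise make an angle at most `θ`, then
`|p^F_φ(G)(h)| ≥ cos(θ/2)·Σ_{α : φ ∼_v α} |h^v(α)|·|∂p^F_φ(G)/∂x^v_α(h)|`. -/
theorem stmt6 (k : ℕ) (hk : 2 ≤ k) (G : SimpleGraph V)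
    (δ η θ : ℝ) (hδ : δ ∈ Set.Ioo (0 : ℝ) 1) (hη : 0 < η)
    (hθ : θ ∈ Set.Ico 0 (2 * Real.pi / 3))
    (u : V) (F : Set G.edgeSet) (hF : incSet G u ⊆ F)
    (φ : G.edgeSet → Fin k)
    (hyp : ∀ v ∈ insert u (G.neighborSet u),
      ∀ h : V → (Fin k → ℕ) → ℂ, memS k G h δ η →
      ∀ ψ ψ' : G.edgeSet → Fin k,
        (∀ e ∈ F, ψ e = φ e) → (∀ e ∈ F, ψ' e = φ e) →
        rpf k G h (F ∪ incSet G v) ψ ≠ 0 ∧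
        cangle (rpf k G h (F ∪ incSet G v) ψ) (rpf k G h (F ∪ incSet G v) ψ') ≤ θ) :
    ∀ v ∈ insert u (G.neighborSet u),
    ∀ h : V → (Fin k → ℕ) → ℂ, memS k G h δ η →
      Real.cos (θ / 2) *
          (∑ᶠ α ∈ {α : Fin k → ℕ | (∑ j, α j) = deg G v ∧ Compat G F φ v α},
            ‖h v α‖ * ‖rpfDeriv k G h F φ v α‖)
        ≤ ‖rpf k G h F φ‖ :=
  stmt6_general k G δ η θ hθ u F φ hyp
end
end

section
/- Fix k ≥ 2, Δ ∈ ℕ, i ∈ ℕ, and a k-color edge-coloring model h : ℕ^k → ℂ. Then there exist finitely many finite simple graphs H_1, …, H_r, each with at most (Δ+1)·i vertices, and constants c_1, …, c_r ∈ ℂ, such that for every finite simple graph G of maximum degree at most Δ: k^{−|E(G)|} · (coefficient of z^i in the polynomial z ↦ p(G)(I + z(h−I))) = Σ_{j=1}^r c_j · ind(H_j, G), where ind(H,G) is the number of induced subgraphs of G isomorphic to H and I + z(h−I) denotes the edge-coloring model α ↦ 1 + z(h(α) − 1). -/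
noncomputable section

variable {V : Type} [Fintype V] [DecidableEq V]

/-- Partition function of a `k`-color edge-coloring model `h`:
`p(G)(h) = Σ_{φ : E → [k]} Π_{v ∈ V} h(φ(δ(v)))`. -/
def pf (k : ℕ) (G : SimpleGraph V) (h : (Fin k → ℕ) → ℂ) : ℂ :=
  ∑ᶠ φ : G.edgeSet → Fin k, ∏ v : V, h (colorVec G φ v)

/-- `ind(H,G)`: the number of induced subgraphs of `G` isomorphic to `H`, i.e. the number
of vertex subsets `S ⊆ V(G)` with `G[S] ≅ H`. -/
def indCount {W : Type} (H : SimpleGraph W) {V : Type} (G : SimpleGraph V) : ℕ :=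
  Nat.card {S : Set V // Nonempty (G.induce S ≃g H)}


/-!
Expanding `∏ v, (1 + z (h(φ(δ v)) - 1))` over subsets shows that `k^{-|E|}` times the
coefficient of `z^i` is a sum, over the `i`-sets `A` of vertices, of a weight that only sees the
edges at `A`, hence only the induced subgraph on the closed neighbourhood `N[A]`. Möbius inversion
over the sets between `A` and `N[A]` turns this into `∑_S g(G[S])` for an isomorphism invariant
`g` that vanishes unless `S` is dominated by an `i`-set, so unless `|S| ≤ (Δ+1) i`. Grouping the
sets `S` by the isomorphism type of `G[S]` gives the linear combination of induced subgraph
counts.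
-/

open Finset

theorem Fintype.sum_comp_of_injective {α β γ M : Type*} [Fintype α] [Fintype β] [Fintype γ]
    [DecidableEq α] [DecidableEq β] [AddCommMonoid M] {ι : α → β}
    (hι : Function.Injective ι) (F : (α → γ) → M) :
    ∑ g : β → γ, F (g ∘ ι) =
      Fintype.card γ ^ (Fintype.card β - Fintype.card α) • ∑ f : α → γ, F f := by
  classical
  let split := Equiv.piEquivPiSubtypeProd (· ∈ Set.range ι) (fun _ => γ)
  have hrestrict : ∀ p : (Set.range ι → γ) × ({b // b ∉ Set.range ι} → γ),
      split.symm p ∘ ι = p.1 ∘ Equiv.ofInjective ι hι := fun p => by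
    funext a
    simp [split, Equiv.piEquivPiSubtypeProd]
  have hcard : Fintype.card {b // b ∉ Set.range ι} = Fintype.card β - Fintype.card α := by
    rw [Fintype.card_subtype_compl, Set.card_range_of_injective hι]
  rw [← split.symm.sum_comp, Fintype.sum_prod_type]
  simp only [hrestrict, sum_const, card_univ, Fintype.card_fun, hcard, ← smul_sum]
  congr 1
  exact (Equiv.arrowCongr (Equiv.ofInjective ι hι) (Equiv.refl γ)).symm.sum_comp _

theorem Sym2.apply_mem_map_iff {α β : Type*} {f : α → β} (hf : Function.Injective f) {a : α}
    {z : Sym2 α} : f a ∈ Sym2.map f z ↔ a ∈ z := by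
  simp only [Sym2.mem_map, hf.eq_iff, exists_eq_right]

theorem Finset.powerset_map {α β : Type*} [DecidableEq β] (f : α ↪ β) (s : Finset α) :
    (s.map f).powerset = s.powerset.map (mapEmbedding f).toEmbedding := by
  rw [map_eq_image, powerset_image, map_eq_image]
  congr 1
  funext t
  simp [map_eq_image]

theorem Finset.sum_Icc_neg_one_pow_card_sdiff {α R : Type*} [DecidableEq α] [CommRing R]
    {s t : Finset α} (hst : s ⊆ t) :
    ∑ u ∈ Icc s t, (-1 : R) ^ (u \ s).card = if s = t then 1 else 0 := by
  have hdisj : ∀ u ∈ (t \ s).powerset, Disjoint s u := fun u hu =>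
    disjoint_of_subset_right (mem_powerset.1 hu) disjoint_sdiff
  have hempty : t \ s = ∅ ↔ s = t := by
    rw [sdiff_eq_empty_iff_subset]
    exact ⟨hst.antisymm, fun h => h ▸ subset_refl s⟩
  rw [Icc_eq_image_powerset hst, sum_image fun u hu v hv huv => by
    rw [← union_sdiff_cancel_left (hdisj u hu),
      ← union_sdiff_cancel_left (hdisj v hv)]
    exact congrArg (· \ s) huv]
  rw [sum_congr rfl fun u hu => by rw [union_sdiff_cancel_left (hdisj u hu)]]
  have hcast : ∑ u ∈ (t \ s).powerset, (-1 : R) ^ u.card =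
      ((∑ u ∈ (t \ s).powerset, (-1 : ℤ) ^ u.card : ℤ) : R) := by
    push_cast
    rfl
  rw [hcast, sum_powerset_neg_one_pow_card]
  simp only [hempty]
  split_ifs <;> simp

theorem Finset.sum_Icc_sum_Icc_neg_one_pow_mul {α R : Type*} [DecidableEq α] [CommRing R]
    {s t : Finset α} (hst : s ⊆ t) (g : Finset α → R) :
    ∑ u ∈ Icc s t, ∑ v ∈ Icc s u, (-1 : R) ^ (u \ v).card * g v = g t := by
  rw [sum_comm' (t' := Icc s t) (s' := fun v => Icc v t)]
  · simp_rw [← sum_mul]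
    rw [sum_congr rfl fun v hv => by
      rw [sum_Icc_neg_one_pow_card_sdiff (mem_Icc.1 hv).2]]
    simp [hst]
  · intro u v
    simp only [mem_Icc]
    grind

lemma maxDeg_induce_le {U : Type} [Fintype U] (G : SimpleGraph U) (s : Set U) [Fintype s] :
    maxDeg (G.induce s) ≤ maxDeg G := by
  refine Finset.sup_le fun v _ => ?_
  refine le_trans ?_ (Finset.le_sup (f := deg G) (mem_univ v.1))
  exact Nat.card_le_card_of_injective (fun u => (⟨u.1.1, u.2⟩ : G.neighborSet v.1))
    fun u₁ u₂ hu => by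
      ext
      simpa using congrArg Subtype.val hu

section InducedSubgraphCounts

open scoped Classical

variable {U : Type} [Fintype U]

def numIsoCopies {n : ℕ} (H : SimpleGraph (Fin n)) : ℕ :=
  Nat.card {H' : SimpleGraph (Fin n) // Nonempty (H' ≃g H)}

lemma sum_inv_numIsoCopies (K : SimpleGraph U) (n : ℕ) :
    ∑ H : SimpleGraph (Fin n), (if Nonempty (K ≃g H) then (numIsoCopies H : ℂ)⁻¹ else 0) =
      if Fintype.card U = n then 1 else 0 := by
  split_ifs with hn
  · set copies := univ.filter fun H : SimpleGraph (Fin n) => Nonempty (K ≃g H)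
    have hcopies : ∀ H ∈ copies, numIsoCopies H = copies.card := fun H hH => by
      obtain ⟨eKH⟩ := (mem_filter.1 hH).2
      rw [numIsoCopies, ← Fintype.card_subtype, ← Nat.card_eq_fintype_card]
      exact Nat.card_congr (Equiv.subtypeEquivRight fun H' =>
        ⟨fun ⟨e⟩ => ⟨eKH.trans e.symm⟩, fun ⟨e⟩ => ⟨e.symm.trans eKH⟩⟩)
    have hne : copies.card ≠ 0 := card_ne_zero.2
      ⟨K.overFin hn, mem_filter.2 ⟨mem_univ _, ⟨K.overFinIso hn⟩⟩⟩
    rw [← sum_filter, sum_congr rfl fun H hH => by rw [hcopies H hH],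
      sum_const, nsmul_eq_mul]
    exact mul_inv_cancel₀ (Nat.cast_ne_zero.2 hne)
  · refine sum_eq_zero fun H _ => if_neg ?_
    rintro ⟨e⟩
    exact hn (by simpa using Fintype.card_congr e.toEquiv)

lemma indCount_eq_card {X W : Type} [Fintype W] (H : SimpleGraph X) (G : SimpleGraph W) :
    indCount H G =
      (univ.filter fun S : Finset W => Nonempty (G.induce (S : Set W) ≃g H)).card := by
  rw [indCount, ← Fintype.card_subtype, ← Nat.card_eq_fintype_card]
  exact Nat.card_congr (Equiv.subtypeEquiv Fintype.finsetEquivSet fun S => by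
    rw [Fintype.finsetEquivSet_apply]).symm

def IsGraphInvariant (g : ∀ {U : Type} [Fintype U] [DecidableEq U], SimpleGraph U → ℂ) :
    Prop :=
  ∀ {U U' : Type} [Fintype U] [DecidableEq U] [Fintype U'] [DecidableEq U']
    {K : SimpleGraph U} {K' : SimpleGraph U'}, (K ≃g K') → g K = g K'

variable (N : ℕ) (g : ∀ {U : Type} [Fintype U] [DecidableEq U], SimpleGraph U → ℂ)

lemma sum_div_numIsoCopies_mul_ite_iso [DecidableEq U] (hg : IsGraphInvariant g)
    (K : SimpleGraph U) :
    ∑ x : Σ n : Fin (N + 1), SimpleGraph (Fin n),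
      g x.2 / numIsoCopies x.2 * (if Nonempty (K ≃g x.2) then 1 else 0) =
      if Fintype.card U ≤ N then g K else 0 := by
  have hfiber : ∀ n : ℕ, ∑ H : SimpleGraph (Fin n),
      g H / numIsoCopies H * (if Nonempty (K ≃g H) then 1 else 0) =
        g K * if Fintype.card U = n then 1 else 0 := fun n => by
    rw [← sum_inv_numIsoCopies K n, mul_sum]
    refine sum_congr rfl fun H _ => ?_
    split_ifs with hKH
    · rw [show g K = g H from hg hKH.some, div_eq_mul_inv, mul_one]
    · simp
  rw [← univ_sigma_univ, sum_sigma]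
  simp only [hfiber, ← mul_sum]
  split_ifs with hN
  · rw [sum_eq_single ⟨Fintype.card U, Nat.lt_succ_of_le hN⟩ (fun n _ hn => if_neg fun h =>
      hn (Fin.ext h.symm)) (by simp), if_pos rfl, mul_one]
  · rw [sum_eq_zero fun n _ => if_neg (by have := n.2; omega), mul_zero]

theorem exists_sum_indCount_eq_sum_induce (hg : IsGraphInvariant g) :
    ∃ (r : ℕ) (sizes : Fin r → ℕ) (H : ∀ j : Fin r, SimpleGraph (Fin (sizes j)))
      (c : Fin r → ℂ),
      (∀ j, sizes j ≤ N) ∧ ∀ (W : Type) [Fintype W] [DecidableEq W] (G : SimpleGraph W),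
        (∀ S : Finset W, N < S.card → g (G.induce (S : Set W)) = 0) →
        ∑ S : Finset W, g (G.induce (S : Set W)) = ∑ j, c j * indCount (H j) G := by
  let e := (Fintype.equivFin (Σ n : Fin (N + 1), SimpleGraph (Fin n))).symm
  -- every isomorphism type on `n ≤ N` vertices is listed `numIsoCopies` times, hence the division
  refine ⟨_, fun j => (e j).1, fun j => (e j).2, fun j => g (e j).2 / numIsoCopies (e j).2,
    fun j => Nat.lt_succ_iff.1 (e j).1.2, fun W _ _ G hG => ?_⟩
  rw [e.sum_comp (fun x => g x.2 / numIsoCopies x.2 * indCount x.2 G)]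
  simp_rw [indCount_eq_card, natCast_card_filter, mul_sum]
  rw [sum_comm]
  refine sum_congr rfl fun S _ => ?_
  rw [sum_div_numIsoCopies_mul_ite_iso N g hg, show Fintype.card (S : Set W) = S.card by simp]
  split_ifs with hS
  · rfl
  · exact hG S (not_le.1 hS)

end InducedSubgraphCounts

namespace EdgeColoringModel

open scoped Classical

variable {U U' : Type} [Fintype U] [DecidableEq U] [Fintype U'] [DecidableEq U']
variable {k : ℕ} (h : (Fin k → ℕ) → ℂ)

def colorCount {E : Set (Sym2 U)} (ψ : E → Fin k) (v : U) : Fin k → ℕ :=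
  fun j => Nat.card {e : E // v ∈ (e : Sym2 U) ∧ ψ e = j}

def weightSum (E : Set (Sym2 U)) (A : Finset U) : ℂ :=
  ∑ ψ : E → Fin k, ∏ v ∈ A, (h (colorCount ψ v) - 1)

/-- If the edges of `E'` at `f '' A` are exactly the images of the edges of `E`, each colouring
of `E` extends in `k ^ (|E'| - |E|)` ways without changing the colour counts at `A`. -/
lemma weightSum_map (f : U ↪ U') {E : Set (Sym2 U)} {E' : Set (Sym2 U')} (A : Finset U)
    (hmaps : ∀ e ∈ E, f.sym2Map e ∈ E')
    (hlocal : ∀ e' ∈ E', ∀ v ∈ A, f v ∈ e' → ∃ e ∈ E, f.sym2Map e = e') :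
    weightSum h E' (A.map f) = k ^ (Nat.card E' - Nat.card E) * weightSum h E A := by
  let ι : E → E' := fun e => ⟨f.sym2Map e, hmaps e e.2⟩
  have hι : Function.Injective ι := fun e₁ e₂ he =>
    Subtype.ext (f.sym2Map.injective (congrArg Subtype.val he))
  have hcount : ∀ ψ' : E' → Fin k, ∀ v ∈ A,
      colorCount ψ' (f v) = colorCount (ψ' ∘ ι) v := by
    intro ψ' v hv
    funext j
    symm
    refine Nat.card_congr (Equiv.ofBijective (fun e => ⟨ι e.1, ?_⟩) ⟨?_, ?_⟩)
    · exact ⟨(Sym2.apply_mem_map_iff f.injective).2 e.2.1, e.2.2⟩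
    · intro e₁ e₂ he
      exact Subtype.ext (hι (congrArg Subtype.val he))
    · rintro ⟨⟨e', he'⟩, hve', hj⟩
      obtain ⟨e, he, rfl⟩ := hlocal e' he' v hv hve'
      exact ⟨⟨⟨e, he⟩, (Sym2.apply_mem_map_iff f.injective).1 hve', hj⟩, rfl⟩
  unfold weightSum
  simp only [prod_map]
  rw [Fintype.sum_congr _ _ fun ψ' => prod_congr rfl fun v hv => by rw [hcount ψ' v hv],
    Fintype.sum_comp_of_injective hι (fun ψ => ∏ v ∈ A, (h (colorCount ψ v) - 1)),
    Fintype.card_fin, Nat.card_eq_fintype_card, Nat.card_eq_fintype_card, nsmul_eq_mul,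
    Nat.cast_pow]

def localWeight (E : Set (Sym2 U)) (A : Finset U) : ℂ :=
  ((k : ℂ) ^ Nat.card E)⁻¹ * weightSum h E A

lemma localWeight_map (hk : k ≠ 0) (f : U ↪ U') {E : Set (Sym2 U)} {E' : Set (Sym2 U')}
    (A : Finset U) (hmaps : ∀ e ∈ E, f.sym2Map e ∈ E')
    (hlocal : ∀ e' ∈ E', ∀ v ∈ A, f v ∈ e' → ∃ e ∈ E, f.sym2Map e = e') :
    localWeight h E' (A.map f) = localWeight h E A := by
  have hcard : Nat.card E ≤ Nat.card E' :=
    Nat.card_le_card_of_injective (fun e => (⟨f.sym2Map e, hmaps e e.2⟩ : E'))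
      fun e₁ e₂ he => Subtype.ext (f.sym2Map.injective (congrArg Subtype.val he))
  have hk' : (k : ℂ) ≠ 0 := Nat.cast_ne_zero.2 hk
  rw [localWeight, localWeight, weightSum_map h f A hmaps hlocal, pow_sub₀ _ hk' hcard]
  field_simp

def edgesIn (K : SimpleGraph U) (T : Finset U) : Set (Sym2 U) :=
  K.edgeSet ∩ (T : Set U).sym2

def closedNbhd (K : SimpleGraph U) (A : Finset U) : Finset U :=
  A.biUnion fun a => insert a (K.neighborFinset a)

lemma mem_closedNbhd {K : SimpleGraph U} {A : Finset U} {v : U} :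
    v ∈ closedNbhd K A ↔ ∃ a ∈ A, v = a ∨ K.Adj a v := by
  simp [closedNbhd]

lemma subset_closedNbhd (K : SimpleGraph U) (A : Finset U) : A ⊆ closedNbhd K A :=
  fun a ha => mem_closedNbhd.2 ⟨a, ha, .inl rfl⟩

lemma localWeight_edgeSet (hk : k ≠ 0) (K : SimpleGraph U) (A : Finset U) :
    localWeight h K.edgeSet A = localWeight h (edgesIn K (closedNbhd K A)) A := by
  have hlocal : ∀ e ∈ K.edgeSet, ∀ v ∈ A, v ∈ e → e ∈ edgesIn K (closedNbhd K A) := by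
    intro e he v hv hve
    refine ⟨he, ?_⟩
    induction e using Sym2.ind with
    | h x y =>
      have hxy : K.Adj x y := he
      rcases Sym2.mem_iff.1 hve with rfl | rfl
      · exact Set.mk_mem_sym2_iff.2 ⟨mem_closedNbhd.2 ⟨v, hv, .inl rfl⟩,
          mem_closedNbhd.2 ⟨v, hv, .inr hxy⟩⟩
      · exact Set.mk_mem_sym2_iff.2 ⟨mem_closedNbhd.2 ⟨v, hv, .inr hxy.symm⟩,
          mem_closedNbhd.2 ⟨v, hv, .inl rfl⟩⟩
  simpa using localWeight_map h hk (Function.Embedding.refl U) A (fun e he => by simpa using he.1)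
    fun e he v hv hve => ⟨e, hlocal e he v hv hve, congrFun Sym2.map_id' e⟩

lemma localWeight_edgesIn_map (hk : k ≠ 0) {K : SimpleGraph U} {K' : SimpleGraph U'}
    (f : K ↪g K') (T A : Finset U) :
    localWeight h (edgesIn K' (T.map f.toEmbedding)) (A.map f.toEmbedding) =
      localWeight h (edgesIn K T) A := by
  refine localWeight_map h hk f.toEmbedding A (fun e he => ?_) fun e' he' _ _ _ => ?_
  · refine ⟨f.map_mem_edgeSet_iff.2 he.1, ?_⟩
    rw [coe_map, Set.sym2_image]
    exact Set.mem_image_of_mem _ he.2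
  · obtain ⟨he'K, he'T⟩ := he'
    rw [coe_map, Set.sym2_image] at he'T
    obtain ⟨e, heT, rfl⟩ := he'T
    exact ⟨e, ⟨f.map_mem_edgeSet_iff.1 he'K, heT⟩, rfl⟩

lemma map_mem_closedNbhd_iff {K : SimpleGraph U} {K' : SimpleGraph U'} (f : K ↪g K')
    {A : Finset U} {v : U} :
    f v ∈ closedNbhd K' (A.map f.toEmbedding) ↔ v ∈ closedNbhd K A := by
  simp [mem_closedNbhd, f.injective.eq_iff]

variable (i : ℕ)

/-- Möbius inversion over the `T` between `A` and `S` makes this a function of `K[S]` alone,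
while the sum over all `S` collapses to the sum of the local weights (`sum_inducedSum`). -/
def inducedSum (K : SimpleGraph U) (S : Finset U) : ℂ :=
  ∑ A ∈ S.powerset with A.card = i ∧ S ⊆ closedNbhd K A,
    ∑ T ∈ S.powerset with A ⊆ T, (-1) ^ (S \ T).card * localWeight h (edgesIn K T) A

lemma inducedSum_map (hk : k ≠ 0) {K : SimpleGraph U} {K' : SimpleGraph U'} (f : K ↪g K')
    (S : Finset U) : inducedSum h i K' (S.map f.toEmbedding) = inducedSum h i K S := by
  unfold inducedSum
  simp only [powerset_map, filter_map, sum_map]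
  refine sum_congr (filter_congr fun A _ => ?_) fun A _ => ?_
  · simp [subset_iff, map_mem_closedNbhd_iff]
  · refine sum_congr (filter_congr fun T _ => ?_) fun T _ => ?_
    · simp
    · simp [← Finset.map_sdiff, localWeight_edgesIn_map h hk]

lemma sum_inducedSum (hk : k ≠ 0) (G : SimpleGraph U) :
    ∑ S, inducedSum h i G S = ∑ A ∈ univ.powersetCard i, localWeight h G.edgeSet A := by
  have hIcc : ∀ A S : Finset U, {T ∈ S.powerset | A ⊆ T} = Icc A S := fun A S => by
    ext T
    simp [and_comm]
  unfold inducedSum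
  simp_rw [hIcc]
  rw [sum_comm' (t' := univ.powersetCard i) (s' := fun A => Icc A (closedNbhd G A))]
  · refine sum_congr rfl fun A _ => ?_
    rw [sum_Icc_sum_Icc_neg_one_pow_mul (subset_closedNbhd G A),
      localWeight_edgeSet h hk]
  · intro S A
    simp only [mem_univ, mem_filter, mem_powerset, mem_Icc, mem_powersetCard, subset_univ]
    tauto

lemma card_closedNbhd_le {K : SimpleGraph U} {Δ : ℕ} (hK : maxDeg K ≤ Δ) (A : Finset U) :
    (closedNbhd K A).card ≤ (Δ + 1) * A.card := by
  have hdeg : ∀ a, (K.neighborFinset a).card ≤ Δ := fun a => by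
    rw [SimpleGraph.card_neighborFinset_eq_degree, ← SimpleGraph.card_neighborSet_eq_degree,
      ← Nat.card_eq_fintype_card]
    exact (le_sup (f := deg K) (mem_univ a)).trans hK
  calc (closedNbhd K A).card ≤ ∑ a ∈ A, (insert a (K.neighborFinset a)).card :=
        card_biUnion_le
    _ ≤ ∑ _a ∈ A, (Δ + 1) :=
        sum_le_sum fun a _ => (card_insert_le _ _).trans (Nat.succ_le_succ (hdeg a))
    _ = (Δ + 1) * A.card := by rw [sum_const, smul_eq_mul, mul_comm]

lemma inducedSum_univ_eq_zero {K : SimpleGraph U} {Δ : ℕ} (hK : maxDeg K ≤ Δ)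
    (hcard : (Δ + 1) * i < Fintype.card U) : inducedSum h i K univ = 0 := by
  refine sum_eq_zero fun A hA => absurd ?_ hcard.not_ge
  obtain ⟨-, hAi, hdom⟩ := mem_filter.1 hA
  calc Fintype.card U = (univ : Finset U).card := card_univ.symm
    _ ≤ (closedNbhd K A).card := card_le_card hdom
    _ ≤ (Δ + 1) * i := hAi ▸ card_closedNbhd_le hK A

lemma pf_eq_sum_weightSum (G : SimpleGraph U) (z : ℂ) :
    pf k G (fun α => 1 + z * (h α - 1)) =
      ∑ A : Finset U, z ^ A.card * weightSum h G.edgeSet A := by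
  unfold pf weightSum
  rw [finsum_eq_sum_of_fintype]
  simp_rw [prod_one_add, prod_mul_distrib, prod_const, mul_sum]
  rw [sum_comm, powerset_univ]
  refine sum_congr rfl fun A _ => ?_
  -- the two sums differ only in their `Fintype` instance on `G.edgeSet`
  congr!

lemma coeff_eq_sum_localWeight (G : SimpleGraph U) (P : Polynomial ℂ)
    (hP : ∀ z, P.eval z = pf k G (fun α => 1 + z * (h α - 1))) :
    ((k : ℂ) ^ Nat.card G.edgeSet)⁻¹ * P.coeff i =
      ∑ A ∈ univ.powersetCard i, localWeight h G.edgeSet A := by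
  have hP' : P = ∑ A : Finset U, Polynomial.C (weightSum h G.edgeSet A) * Polynomial.X ^ A.card :=
    Polynomial.funext fun z => by
      simp only [hP, pf_eq_sum_weightSum, Polynomial.eval_finsetSum, Polynomial.eval_mul,
        Polynomial.eval_C, Polynomial.eval_pow, Polynomial.eval_X, mul_comm]
  rw [hP', Polynomial.finsetSum_coeff]
  simp only [Polynomial.coeff_C_mul_X_pow, mul_sum, mul_ite, mul_zero, powersetCard_eq_filter,
    sum_filter, eq_comm (a := i)]
  rfl

lemma inducedSum_induce_univ (hk : k ≠ 0) (G : SimpleGraph U) (S : Finset U) :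
    inducedSum h i (G.induce (S : Set U)) univ = inducedSum h i G S := by
  rw [← inducedSum_map h i hk (SimpleGraph.Embedding.induce (S : Set U))]
  congr 1
  ext v
  simp

lemma inducedSum_univ_eq_of_iso (hk : k ≠ 0) {K : SimpleGraph U} {K' : SimpleGraph U'}
    (e : K ≃g K') :
    inducedSum h i K univ = inducedSum h i K' univ := by
  rw [← inducedSum_map h i hk e.toEmbedding]
  congr 1
  exact map_univ_equiv e.toEquiv

end EdgeColoringModel

/-- there are finitely many graphs `H_1, …, H_r`, each on at most `(Δ+1)·i`
vertices, and constants `c_1, …, c_r ∈ ℂ`, such that for every simple graph `G` of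
maximum degree at most `Δ`, `k^{−|E(G)|}` times the coefficient of `z^i` in the polynomial
`z ↦ p(G)(I + z(h−I))` equals `Σ_j c_j · ind(H_j, G)`. -/
theorem stmt13 (k : ℕ) (hk : 2 ≤ k) (Δ i : ℕ) (h : (Fin k → ℕ) → ℂ) :
    ∃ (r : ℕ) (sizes : Fin r → ℕ) (H : ∀ j : Fin r, SimpleGraph (Fin (sizes j)))
      (c : Fin r → ℂ),
      (∀ j : Fin r, sizes j ≤ (Δ + 1) * i) ∧
      ∀ (W : Type) [Fintype W] [DecidableEq W] (G : SimpleGraph W), maxDeg G ≤ Δ →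
        ∀ P : Polynomial ℂ,
          (∀ z : ℂ, P.eval z = pf k G (fun α => 1 + z * (h α - 1))) →
          ((k : ℂ) ^ (Nat.card G.edgeSet))⁻¹ * P.coeff i =
            ∑ j : Fin r, c j * (indCount (H j) G : ℂ) := by
  have hk0 : k ≠ 0 := by omega
  obtain ⟨r, sizes, H, c, hsizes, hsum⟩ := exists_sum_indCount_eq_sum_induce ((Δ + 1) * i)
    (fun K => EdgeColoringModel.inducedSum h i K univ)
    (EdgeColoringModel.inducedSum_univ_eq_of_iso h i hk0)
  refine ⟨r, sizes, H, c, hsizes, fun W _ _ G hG P hP => ?_⟩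
  rw [EdgeColoringModel.coeff_eq_sum_localWeight h i G P hP,
    ← EdgeColoringModel.sum_inducedSum h i hk0 G]
  simp only [← EdgeColoringModel.inducedSum_induce_univ h i hk0 G]
  refine hsum W G fun S hS => EdgeColoringModel.inducedSum_univ_eq_zero h i
    ((maxDeg_induce_le G S).trans hG) ?_
  simpa using hS
end
end
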